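/- arXiv:1001.1615 — 5 statements merged into one kernel-verified Lean document; each statement's English description precedes it below -/
import Mathlib

section
/- For all x ∈ (0,1) and all ε with 0 < ε < x, K(ε,x) ≥ ((x-ε)/2)·(log(1 - x/2 - ε/2) - log(1-x)). -/
/-! Split `K(ε, x)` at the midpoint `m = (x + ε) / 2` by the chain rule
`K(ε, x) = K(ε, m) + ε log (m / x) + (1 - ε) log ((1 - m) / (1 - x))`.
The first term is nonnegative (Gibbs), and since `1 - ε = (x - ε) / 2 + (1 - m)`, it remains to see
`ε log (m / x) + (1 - m) log ((1 - m) / (1 - x)) ≥ 0`; by `a log (a / b) ≥ a - b` the left side is at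
least `(x - m) (1 - ε / m) ≥ 0`. -/

/-- Kullback–Leibler divergence between Bernoulli(ε) and Bernoulli(x). -/
noncomputable def bernKL (ε x : ℝ) : ℝ :=
  ε * Real.log (ε / x) + (1 - ε) * Real.log ((1 - ε) / (1 - x))

open Real

lemma sub_le_mul_log_div {a b : ℝ} (ha : 0 < a) (hb : 0 < b) : a - b ≤ a * log (a / b) := by
  have h := one_sub_inv_le_log_of_pos (div_pos ha hb)
  rw [inv_div] at h
  calc a - b = a * (1 - b / a) := by field_simp
    _ ≤ a * log (a / b) := mul_le_mul_of_nonneg_left h ha.le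

lemma bernKL_nonneg {ε x : ℝ} (hε : ε ∈ Set.Ioo (0 : ℝ) 1) (hx : x ∈ Set.Ioo (0 : ℝ) 1) :
    0 ≤ bernKL ε x := by
  have h₀ := sub_le_mul_log_div hε.1 hx.1
  have h₁ := sub_le_mul_log_div (sub_pos.2 hε.2) (sub_pos.2 hx.2)
  unfold bernKL
  linarith

lemma bernKL_eq_bernKL_add {ε x m : ℝ} (hε : ε ∈ Set.Ioo (0 : ℝ) 1)
    (hx : x ∈ Set.Ioo (0 : ℝ) 1) (hm : m ∈ Set.Ioo (0 : ℝ) 1) :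
    bernKL ε x = bernKL ε m + ε * log (m / x) + (1 - ε) * log ((1 - m) / (1 - x)) := by
  have hε₁ : 1 - ε ≠ 0 := (sub_pos.2 hε.2).ne'
  have hx₁ : 1 - x ≠ 0 := (sub_pos.2 hx.2).ne'
  have hm₁ : 1 - m ≠ 0 := (sub_pos.2 hm.2).ne'
  unfold bernKL
  simp only [log_div hε.1.ne' hx.1.ne', log_div hε.1.ne' hm.1.ne', log_div hm.1.ne' hx.1.ne',
    log_div hε₁ hx₁, log_div hε₁ hm₁, log_div hm₁ hx₁]
  ring

lemma mul_log_div_add_mul_log_div_nonneg {ε m x : ℝ} (hε : 0 < ε) (hεm : ε ≤ m) (hmx : m ≤ x)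
    (hx : x < 1) : 0 ≤ ε * log (m / x) + (1 - m) * log ((1 - m) / (1 - x)) := by
  have hm : 0 < m := hε.trans_le hεm
  have h₀ : ε / m * (m - x) ≤ ε * log (m / x) := by
    calc ε / m * (m - x) ≤ ε / m * (m * log (m / x)) :=
          mul_le_mul_of_nonneg_left (sub_le_mul_log_div hm (hm.trans_le hmx)) (by positivity)
      _ = ε * log (m / x) := by field_simp
  have h₁ := sub_le_mul_log_div (sub_pos.2 (hmx.trans_lt hx)) (sub_pos.2 hx)
  have h₂ : 0 ≤ (1 - ε / m) * (x - m) :=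
    mul_nonneg (sub_nonneg.2 ((div_le_one hm).2 hεm)) (sub_nonneg.2 hmx)
  linear_combination h₀ + h₁ + h₂

theorem bernKL_lower_bound_left (x ε : ℝ) (hx : x ∈ Set.Ioo (0 : ℝ) 1)
    (hε : 0 < ε) (hεx : ε < x) :
    (x - ε) / 2 * (Real.log (1 - x / 2 - ε / 2) - Real.log (1 - x)) ≤ bernKL ε x := by
  obtain ⟨hx₀, hx₁⟩ := hx
  set m := (x + ε) / 2 with hm_def
  have hm : m ∈ Set.Ioo (0 : ℝ) 1 := ⟨by linarith, by linarith⟩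
  have hlog : log (1 - x / 2 - ε / 2) - log (1 - x) = log ((1 - m) / (1 - x)) := by
    rw [log_div (by linarith) (by linarith), hm_def]
    ring_nf
  rw [hlog, bernKL_eq_bernKL_add ⟨hε, by linarith⟩ ⟨hx₀, hx₁⟩ hm]
  have hK := bernKL_nonneg ⟨hε, by linarith⟩ hm
  have hrest := mul_log_div_add_mul_log_div_nonneg (m := m) hε (by linarith) (by linarith) hx₁
  linear_combination hK + hrest + log ((1 - m) / (1 - x)) * hm_def
end

section
/- There exists δ₁ ∈ (0,1) such that for all x ∈ (1/2, 1) and all δ with δ₁ < δ < 1 satisfying x(1-δ) > 0, one has K(x(1-δ), x) ≥ δ²·x·log(1 + δx/(1-x)). -/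
open Real Set

lemma Real.log_add_one_le_log_add_div {a w : ℝ} (ha : 0 < a) (hw : 0 < w) :
    log a + 1 ≤ log w + a / w := by
  have := log_le_sub_one_of_pos (div_pos ha hw)
  rw [log_div ha.ne' hw.ne'] at this
  linarith

lemma Real.sub_one_mul_log_add_two_le {a w : ℝ} (ha : 0 < a) (hw : 1 ≤ w) :
    (w - 1) * (log a + 2) ≤ (w + a) * log w := by
  let G : ℝ → ℝ := fun w ↦ (w + a) * log w - (w - 1) * (log a + 2)
  have hG : ∀ y ∈ Ici (1 : ℝ), HasDerivAt G (log y + (y + a) / y - (log a + 2)) y := by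
    intro y hy
    have hy0 : y ≠ 0 := by linarith [mem_Ici.1 hy]
    refine ((((hasDerivAt_id' y).add_const a).mul (hasDerivAt_log hy0)).sub
      (((hasDerivAt_id' y).sub_const 1).mul_const (log a + 2))).congr_deriv ?_
    field_simp
  have hmono : MonotoneOn G (Ici 1) := by
    refine monotoneOn_of_hasDerivWithinAt_nonneg (convex_Ici 1)
      (fun y hy ↦ (hG y hy).continuousAt.continuousWithinAt)
      (fun y hy ↦ (hG y (interior_subset hy)).hasDerivWithinAt) fun y hy ↦ ?_
    have hy0 : 0 < y := by linarith [mem_Ici.1 (interior_subset hy)]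
    rw [add_div, div_self hy0.ne']
    linarith [log_add_one_le_log_add_div ha hy0]
  have := hmono self_mem_Ici hw hw
  simp only [G, log_one, sub_self, mul_zero, zero_mul] at this
  linarith

lemma Real.log_inv_le_mul_log_div_add_two {δ : ℝ} (hδ : 1 / 2 ≤ δ) (hδ1 : δ < 1) :
    log (1 - δ)⁻¹ ≤ δ * (log (δ / (1 - δ)) + 2) := by
  have sub_one_le_mul_log : ∀ t : ℝ, 0 < t → t - 1 ≤ t * log t := fun t ht ↦ by
    have := mul_le_mul_of_nonneg_left (one_sub_inv_le_log_of_pos ht) ht.le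
    rwa [mul_sub, mul_one, mul_inv_cancel₀ ht.ne'] at this
  have h1 := sub_one_le_mul_log δ (by linarith)
  have h2 := sub_one_le_mul_log (1 - δ) (by linarith)
  rw [log_inv, log_div (by linarith) (by linarith)]
  nlinarith

lemma mul_log_inv_le_mul_log_one_add_div {δ u x : ℝ} (hδ : 1 / 2 ≤ δ) (hδ1 : δ < 1)
    (hu : 0 < u) (hx : 0 ≤ x) :
    x * (1 - δ) * log (1 - δ)⁻¹ ≤ (u + x * δ * (1 - δ)) * log (1 + δ * x / u) := by
  have hs : 0 < 1 - δ := by linarith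
  have key := sub_one_mul_log_add_two_le (a := δ / (1 - δ)) (w := 1 + δ * x / u)
    (by positivity) (le_add_of_nonneg_right (by positivity))
  calc x * (1 - δ) * log (1 - δ)⁻¹
      ≤ x * (1 - δ) * (δ * (log (δ / (1 - δ)) + 2)) :=
        mul_le_mul_of_nonneg_left (log_inv_le_mul_log_div_add_two hδ hδ1) (by positivity)
    _ = u * (1 - δ) * ((1 + δ * x / u - 1) * (log (δ / (1 - δ)) + 2)) := by
        field_simp
        ring
    _ ≤ u * (1 - δ) * ((1 + δ * x / u + δ / (1 - δ)) * log (1 + δ * x / u)) :=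
        mul_le_mul_of_nonneg_left key (by positivity)
    _ = (u + x * δ * (1 - δ)) * log (1 + δ * x / u) := by
        field_simp
        ring

lemma bernKL_mul_one_sub {x δ : ℝ} (hx : x ≠ 0) (hx1 : x ≠ 1) :
    bernKL (x * (1 - δ)) x =
      x * (1 - δ) * log (1 - δ) + (1 - x * (1 - δ)) * log (1 + δ * x / (1 - x)) := by
  have hx1' : 1 - x ≠ 0 := sub_ne_zero.2 hx1.symm
  rw [bernKL, mul_div_cancel_left₀ _ hx]
  congr 3
  field_simp
  ring

theorem bernKL_lower_bound_scaled :
    ∃ δ₁ ∈ Set.Ioo (0 : ℝ) 1, ∀ x ∈ Set.Ioo (1/2 : ℝ) 1, ∀ δ : ℝ, δ₁ < δ → δ < 1 →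
      0 < x * (1 - δ) →
      δ ^ 2 * x * Real.log (1 + δ * x / (1 - x)) ≤ bernKL (x * (1 - δ)) x := by
  refine ⟨1 / 2, ⟨by norm_num, by norm_num⟩, ?_⟩
  rintro x ⟨hx, hx1⟩ δ hδ hδ1 -
  have h := mul_log_inv_le_mul_log_one_add_div hδ.le hδ1 (sub_pos.2 hx1) (by linarith : 0 ≤ x)
  rw [log_inv] at h
  rw [bernKL_mul_one_sub (by linarith) hx1.ne]
  linear_combination h
end

section
/- For any x ∈ (0,1) and δ_x = δ₀·x·(1-x)·√(log α / α) with δ₀ > 0 fixed, as α → ∞ one has K(x-δ_x, x) = (δ₀²·log α·x(1-x))/(2α) + O(x(1-x)(log α/α)^{3/2}) uniformly in x; in particular for α large enough K(x-δ_x, x) ≥ δ_x²/(3x(1-x)). -/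
open Real Filter Topology

theorem abs_one_add_mul_log_one_add_sub_le {u : ℝ} (hu : |u| ≤ 1 / 2) :
    |(1 + u) * log (1 + u) - (u + u ^ 2 / 2)| ≤ 4 * |u| ^ 3 := by
  have hlog : |log (1 + u) - (u - u ^ 2 / 2)| ≤ 2 * |u| ^ 3 := by
    have h := abs_log_sub_add_sum_range_le (x := -u) (by rw [abs_neg]; linarith) 2
    norm_num [Finset.sum_range_succ] at h
    calc |log (1 + u) - (u - u ^ 2 / 2)| = |-u + u ^ 2 / 2 + log (1 + u)| := by ring_nf
      _ ≤ |u| ^ 3 / (1 - |u|) := h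
      _ ≤ 2 * |u| ^ 3 := by
          rw [div_le_iff₀ (by linarith)]
          nlinarith [pow_nonneg (abs_nonneg u) 3]
  have h_one_add : |1 + u| ≤ 3 / 2 := by
    have := abs_add_le 1 u
    norm_num at this
    linarith
  calc |(1 + u) * log (1 + u) - (u + u ^ 2 / 2)|
      = |(1 + u) * (log (1 + u) - (u - u ^ 2 / 2)) - u ^ 3 / 2| := by ring_nf
    _ ≤ |1 + u| * |log (1 + u) - (u - u ^ 2 / 2)| + |u| ^ 3 / 2 := by
        refine (abs_sub _ _).trans ?_
        rw [abs_mul, abs_div, abs_pow, abs_two]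
    _ ≤ 3 / 2 * (2 * |u| ^ 3) + |u| ^ 3 / 2 := by gcongr
    _ ≤ 4 * |u| ^ 3 := by linarith [pow_nonneg (abs_nonneg u) 3]

theorem bernKL_sub_mul_eq {x : ℝ} (hx : x ∈ Set.Ioo 0 1) (s : ℝ) :
    bernKL (x - s * x * (1 - x)) x =
      x * ((1 + -(s * (1 - x))) * log (1 + -(s * (1 - x))))
        + (1 - x) * ((1 + s * x) * log (1 + s * x)) := by
  have hx₀ : x ≠ 0 := hx.1.ne'
  have hx₁ : 1 - x ≠ 0 := (sub_pos.mpr hx.2).ne'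
  have hlower : (x - s * x * (1 - x)) / x = 1 + -(s * (1 - x)) := by field_simp; ring
  have hupper : (1 - (x - s * x * (1 - x))) / (1 - x) = 1 + s * x := by field_simp; ring
  rw [bernKL, hlower, hupper]
  ring

theorem abs_bernKL_sub_mul_sub_le {x s : ℝ} (hx : x ∈ Set.Ioo 0 1) (hs : |s| ≤ 1 / 2) :
    |bernKL (x - s * x * (1 - x)) x - s ^ 2 * x * (1 - x) / 2| ≤ 4 * |s| ^ 3 * (x * (1 - x)) := by
  rw [bernKL_sub_mul_eq hx]
  obtain ⟨hx₀, hx₁⟩ := hx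
  have h1x : 0 < 1 - x := sub_pos.mpr hx₁
  set a := -(s * (1 - x))
  set b := s * x
  have ha : |a| = |s| * (1 - x) := by rw [abs_neg, abs_mul, abs_of_pos h1x]
  have hb : |b| = |s| * x := by rw [abs_mul, abs_of_pos hx₀]
  have hφa := abs_one_add_mul_log_one_add_sub_le (u := a) (by rw [ha]; nlinarith [abs_nonneg s])
  have hφb := abs_one_add_mul_log_one_add_sub_le (u := b) (by rw [hb]; nlinarith [abs_nonneg s])
  calc _
      = |x * ((1 + a) * log (1 + a) - (a + a ^ 2 / 2))
          + (1 - x) * ((1 + b) * log (1 + b) - (b + b ^ 2 / 2))| := by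
        congr 1
        ring
    _ ≤ x * (4 * |a| ^ 3) + (1 - x) * (4 * |b| ^ 3) := by
        refine (abs_add_le _ _).trans ?_
        rw [abs_mul, abs_mul, abs_of_pos hx₀, abs_of_pos h1x]
        gcongr
    _ = 4 * |s| ^ 3 * (x * (1 - x)) * ((1 - x) ^ 2 + x ^ 2) := by rw [ha, hb]; ring
    _ ≤ 4 * |s| ^ 3 * (x * (1 - x)) := by
        have hsum : (1 - x) ^ 2 + x ^ 2 ≤ 1 := by nlinarith
        have hcoef : 0 ≤ 4 * |s| ^ 3 * (x * (1 - x)) := by positivity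
        nlinarith

theorem sq_div_le_bernKL_sub_mul {x s : ℝ} (hx : x ∈ Set.Ioo 0 1) (hs : |s| ≤ 1 / 24) :
    (s * x * (1 - x)) ^ 2 / (3 * x * (1 - x)) ≤ bernKL (x - s * x * (1 - x)) x := by
  have hxx : 0 < x * (1 - x) := mul_pos hx.1 (sub_pos.mpr hx.2)
  have hexp := (abs_le.mp (abs_bernKL_sub_mul_sub_le hx (hs.trans (by norm_num)))).1
  have hcube : 4 * |s| ^ 3 ≤ s ^ 2 / 6 := by
    rw [← sq_abs s]
    nlinarith [sq_nonneg |s|]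
  have hleft : (s * x * (1 - x)) ^ 2 / (3 * x * (1 - x)) = s ^ 2 * (x * (1 - x)) / 3 := by
    field_simp
  rw [hleft]
  nlinarith [mul_le_mul_of_nonneg_right hcube hxx.le]

theorem eventually_mul_sqrt_log_div_self_le (δ₀ : ℝ) {ε : ℝ} (hε : 0 < ε) :
    ∀ᶠ α in atTop, δ₀ * √(log α / α) ≤ ε := by
  have hlim : Tendsto (fun α : ℝ => δ₀ * √(log α / α)) atTop (𝓝 0) := by
    have := ((tendsto_pow_log_div_mul_add_atTop 1 0 1 one_ne_zero).sqrt).const_mul δ₀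
    simpa using this
  exact hlim.eventually (ge_mem_nhds hε)

theorem bernKL_shift_expansion (δ₀ : ℝ) (hδ₀ : 0 < δ₀) :
    ∃ C > 0, ∃ α₀ : ℝ, ∀ α ≥ α₀, ∀ x ∈ Set.Ioo (0 : ℝ) 1,
      |bernKL (x - δ₀ * x * (1 - x) * Real.sqrt (Real.log α / α)) x -
          δ₀ ^ 2 * Real.log α * x * (1 - x) / (2 * α)| ≤
        C * (x * (1 - x)) * (Real.log α / α) ^ ((3 : ℝ) / 2) ∧
      (δ₀ * x * (1 - x) * Real.sqrt (Real.log α / α)) ^ 2 / (3 * x * (1 - x)) ≤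
        bernKL (x - δ₀ * x * (1 - x) * Real.sqrt (Real.log α / α)) x := by
  obtain ⟨α₀, hα₀⟩ := eventually_atTop.mp <| (eventually_ge_atTop 1).and <|
    eventually_mul_sqrt_log_div_self_le δ₀ (by norm_num : (0 : ℝ) < 1 / 24)
  refine ⟨4 * δ₀ ^ 3, by positivity, α₀, fun α hα x hx => ?_⟩
  obtain ⟨hα₁, hsmall⟩ := hα₀ α hα
  have hu : 0 ≤ log α / α := div_nonneg (log_nonneg hα₁) (by linarith)
  have hrem : (log α / α) ^ ((3 : ℝ) / 2) = √(log α / α) ^ 3 := by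
    rw [sqrt_eq_rpow, ← rpow_natCast, ← rpow_mul hu]
    norm_num
  set t := √(log α / α)
  have hs : |δ₀ * t| ≤ 1 / 24 := by rwa [abs_of_nonneg (by positivity)]
  have hshift : δ₀ * x * (1 - x) * t = δ₀ * t * x * (1 - x) := by ring
  have hmain : δ₀ ^ 2 * log α * x * (1 - x) / (2 * α) = (δ₀ * t) ^ 2 * x * (1 - x) / 2 := by
    rw [mul_pow, sq_sqrt hu]
    ring
  rw [hshift, hmain, hrem]
  refine ⟨(abs_bernKL_sub_mul_sub_le hx (by linarith)).trans_eq ?_,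
    sq_div_le_bernKL_sub_mul hx hs⟩
  rw [abs_of_nonneg (by positivity)]
  ring
end

section
/- Let a, b > 0, 0 < τ₁ < a, 0 < τ₂ < b, and suppose a < 2 and b < 2. Then log(Γ(a-τ₁)Γ(b-τ₂)/(Γ(a+τ₁)Γ(b+τ₂))) + log(Γ(a+b+τ₁+τ₂)/Γ(a+b-τ₁-τ₂)) ≤ 2τ₁/(a-τ₁) + 2τ₂/(b-τ₂) + C·(τ₁+τ₂) for some absolute constant C > 0. -/
/-!
`log ∘ Γ` is convex on `(0, ∞)`, so its secant slopes increase. Between `1/2` and `1` the slope is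
`-log π` (as `Γ (1/2) = √π`), and between `8` and `9` it is `log 8`; this bounds every secant slope
on `[1, ∞)` from below and on `(0, 8]` from above. The Gamma ratio at `a ± τ₁` is moved to `[1, ∞)`
by `Γ (x + 1) = x Γ (x)`, at the price of `log ((a + τ₁) / (a - τ₁)) ≤ 2 τ₁ / (a - τ₁)`, while the
ratio at `a + b ± (τ₁ + τ₂)` already lies in `(0, 8)`.
-/

open Real

section Slope

variable {𝕜 : Type*} [Field 𝕜] [LinearOrder 𝕜] [IsStrictOrderedRing 𝕜] {s : Set 𝕜} {f : 𝕜 → 𝕜}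

theorem ConvexOn.slope_le_slope {x y u v : 𝕜} (hf : ConvexOn 𝕜 s f) (hx : x ∈ s) (hv : v ∈ s)
    (hxy : x < y) (hyu : y ≤ u) (huv : u < v) :
    (f y - f x) / (y - x) ≤ (f v - f u) / (v - u) := by
  rcases hyu.eq_or_lt with rfl | hyu
  · exact hf.slope_mono_adjacent hx hv hxy huv
  have hy : y ∈ s := hf.1.ordConnected.out hx hv ⟨hxy.le, (hyu.trans huv).le⟩
  have hu : u ∈ s := hf.1.ordConnected.out hx hv ⟨(hxy.trans hyu).le, huv.le⟩
  exact (hf.slope_mono_adjacent hx hu hxy hyu).trans (hf.slope_mono_adjacent hy hv hyu huv)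

end Slope

namespace Real

theorem log_Gamma_add_one {x : ℝ} (hx : 0 < x) :
    log (Gamma (x + 1)) = log (Gamma x) + log x := by
  rw [Gamma_add_one hx.ne', log_mul hx.ne' (Gamma_pos_of_pos hx).ne', add_comm]

theorem log_Gamma_sub_log_Gamma_le_of_one_le {u v : ℝ} (hu : 1 ≤ u) (huv : u ≤ v) :
    log (Gamma u) - log (Gamma v) ≤ (v - u) * log π := by
  rcases huv.eq_or_lt with rfl | huv
  · simp
  have hslope := convexOn_log_Gamma.slope_le_slope (x := 1 / 2) (y := 1) (by norm_num)
    (by simp only [Set.mem_Ioi]; linarith) (by norm_num) hu huv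
  have hleft : (log (Gamma 1) - log (Gamma (1 / 2))) / (1 - 1 / 2) = -log π := by
    rw [Gamma_one, Gamma_one_half_eq, log_sqrt pi_pos.le, log_one]
    ring
  simp only [Function.comp_apply, hleft, le_div_iff₀ (sub_pos.2 huv)] at hslope
  linarith

theorem log_Gamma_sub_log_Gamma_le_of_le_eight {u v : ℝ} (hu : 0 < u) (huv : u ≤ v) (hv : v ≤ 8) :
    log (Gamma v) - log (Gamma u) ≤ (v - u) * log 8 := by
  rcases huv.eq_or_lt with rfl | huv
  · simp
  have hslope := convexOn_log_Gamma.slope_le_slope (u := 8) (v := 9) hu (by norm_num) huv hv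
    (by norm_num)
  have hright : (log (Gamma 9) - log (Gamma 8)) / (9 - 8) = log 8 := by
    rw [show (9 : ℝ) = 8 + 1 by norm_num, log_Gamma_add_one (by norm_num)]
    ring
  simp only [Function.comp_apply, hright, div_le_iff₀ (sub_pos.2 huv)] at hslope
  linarith

theorem log_Gamma_sub_log_Gamma_le {u v : ℝ} (hu : 0 < u) (huv : u ≤ v) :
    log (Gamma u) - log (Gamma v) ≤ (v - u) / u + (v - u) * log π := by
  have hshift := log_Gamma_sub_log_Gamma_le_of_one_le (u := u + 1) (v := v + 1) (by linarith)
    (by linarith)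
  have hlog : log v - log u ≤ (v - u) / u := by
    have := log_le_sub_one_of_pos (div_pos (hu.trans_le huv) hu)
    rwa [log_div (hu.trans_le huv).ne' hu.ne', div_sub_one hu.ne'] at this
  rw [log_Gamma_add_one hu, log_Gamma_add_one (hu.trans_le huv)] at hshift
  linarith

end Real

theorem gamma_ratio_bound_small :
    ∃ C > 0, ∀ a b τ₁ τ₂ : ℝ, 0 < τ₁ → τ₁ < a → 0 < τ₂ → τ₂ < b → a < 2 → b < 2 →
      Real.log (Real.Gamma (a - τ₁) * Real.Gamma (b - τ₂) /
          (Real.Gamma (a + τ₁) * Real.Gamma (b + τ₂))) +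
        Real.log (Real.Gamma (a + b + (τ₁ + τ₂)) / Real.Gamma (a + b - (τ₁ + τ₂))) ≤
      2 * τ₁ / (a - τ₁) + 2 * τ₂ / (b - τ₂) + C * (τ₁ + τ₂) := by
  have hπ : 0 < log π := log_pos (by linarith [pi_gt_three])
  have h8 : 0 < log 8 := log_pos (by norm_num)
  refine ⟨2 * (log π + log 8), by positivity, ?_⟩
  intro a b τ₁ τ₂ hτ₁ hτ₁a hτ₂ hτ₂b ha hb
  have hA := log_Gamma_sub_log_Gamma_le (sub_pos.2 hτ₁a) (v := a + τ₁) (by linarith)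
  have hB := log_Gamma_sub_log_Gamma_le (sub_pos.2 hτ₂b) (v := b + τ₂) (by linarith)
  have hC := log_Gamma_sub_log_Gamma_le_of_le_eight (u := a + b - (τ₁ + τ₂))
    (v := a + b + (τ₁ + τ₂)) (by linarith) (by linarith) (by linarith)
  rw [show a + τ₁ - (a - τ₁) = 2 * τ₁ by ring] at hA
  rw [show b + τ₂ - (b - τ₂) = 2 * τ₂ by ring] at hB
  have hΓ {x : ℝ} (hx : 0 < x) : Gamma x ≠ 0 := (Gamma_pos_of_pos hx).ne'
  rw [log_div (mul_ne_zero (hΓ (by linarith)) (hΓ (by linarith)))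
      (mul_ne_zero (hΓ (by linarith)) (hΓ (by linarith))),
    log_mul (hΓ (by linarith)) (hΓ (by linarith)), log_mul (hΓ (by linarith)) (hΓ (by linarith)),
    log_div (hΓ (by linarith)) (hΓ (by linarith))]
  linarith
end

section
/- Let 0 < ε < 1, α > 0, and 0 < x < ε/3. Then the Beta(α/(1-ε), α/ε) density satisfies g_{α,ε}(x) ≤ C·√α/(x(1-x))·(2x/(x+ε))^{α/(2(1-ε))} for some absolute constant C > 0 and all α large enough, and consequently ∫₀^{ε/3} g_{α,ε}(x) dx ≤ C·α^{-1/2}·(1-ε)·(3/2)^{-α/(2(1-ε))}. -/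
/-!
Integrating only over a window of length `1/(a+b)` to the right of the mean `p = a/(a+b)` gives
`B(a,b) ≥ e⁻¹ p^(a-1) (1-p)^(b-1) / (a+b)`. For `a = α/(1-ε)`, `b = α/ε` the mean is `ε`, so
`g(x) ≤ e α / (x(1-x)) · (x/ε)^a ((1-x)/(1-ε))^b = e α / (x(1-x)) · exp(-α K(ε,x) / (ε(1-ε)))`.
With `r = x/ε ≤ 1/3`, the elementary bound `log r + 1 - r ≤ -1/12 + log(2r/(1+r)) / 2` turns the
exponential into `exp(-α/12) (2x/(x+ε))^(α/(2(1-ε)))`, and `exp(-α/12)` absorbs `α` into `√α`.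
Since `(2x/(x+ε))^q ≤ (2x/ε)^q`, the integral over `[0, ε/3]` is then that of a power of `x`.
-/

open MeasureTheory intervalIntegral Real

/-- Beta density with parameters a = α/(1-ε), b = α/ε. -/
noncomputable def betaDens (α ε x : ℝ) : ℝ :=
  x ^ (α / (1 - ε) - 1) * (1 - x) ^ (α / ε - 1) *
    (Real.Gamma (α / (ε * (1 - ε))) / (Real.Gamma (α / (1 - ε)) * Real.Gamma (α / ε)))

lemma Real.Gamma_mul_Gamma_eq_Gamma_add_mul_integral {a b : ℝ} (ha : 0 < a) (hb : 0 < b) :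
    Gamma a * Gamma b = Gamma (a + b) * ∫ x in (0 : ℝ)..1, x ^ (a - 1) * (1 - x) ^ (b - 1) := by
  have h := Complex.Gamma_mul_Gamma_eq_betaIntegral (s := a) (t := b)
    (by simpa using ha) (by simpa using hb)
  have hB : Complex.betaIntegral a b =
      ((∫ x in (0 : ℝ)..1, x ^ (a - 1) * (1 - x) ^ (b - 1) : ℝ) : ℂ) := by
    rw [Complex.betaIntegral, ← intervalIntegral.integral_ofReal]
    refine intervalIntegral.integral_congr fun x hx => ?_
    rw [Set.uIcc_of_le zero_le_one] at hx
    push_cast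
    rw [Complex.ofReal_cpow hx.1, Complex.ofReal_cpow (sub_nonneg.2 hx.2)]
    push_cast
    rfl
  rw [hB, ← Complex.ofReal_add, Complex.Gamma_ofReal, Complex.Gamma_ofReal,
    Complex.Gamma_ofReal, ← Complex.ofReal_mul, ← Complex.ofReal_mul] at h
  exact_mod_cast h

lemma Real.exp_neg_one_le_one_sub_inv_rpow {b : ℝ} (hb : 1 < b) :
    exp (-1) ≤ (1 - b⁻¹) ^ (b - 1) := by
  have hpos : 0 < 1 - b⁻¹ := sub_pos.2 (inv_lt_one_of_one_lt₀ hb)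
  rw [rpow_def_of_pos hpos, exp_le_exp]
  have hlog := one_sub_inv_le_log_of_pos hpos
  have hb1 : 0 < b - 1 := sub_pos.2 hb
  have hinv : 1 - (1 - b⁻¹)⁻¹ = -(b - 1)⁻¹ := by
    field_simp
    ring
  rw [hinv] at hlog
  calc (-1 : ℝ) = -(b - 1)⁻¹ * (b - 1) := by field_simp
    _ ≤ log (1 - b⁻¹) * (b - 1) := mul_le_mul_of_nonneg_right hlog hb1.le

lemma continuous_rpow_mul_one_sub_rpow {a b : ℝ} (ha : 1 ≤ a) (hb : 1 ≤ b) :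
    Continuous fun x : ℝ => x ^ (a - 1) * (1 - x) ^ (b - 1) :=
  (continuous_id.rpow_const fun _ => Or.inr (sub_nonneg.2 ha)).mul
    ((continuous_const.sub continuous_id).rpow_const fun _ => Or.inr (sub_nonneg.2 hb))

lemma le_integral_rpow_mul_one_sub_rpow {a b : ℝ} (ha : 1 ≤ a) (hb : 1 < b) :
    exp (-1) / (a + b) * (a / (a + b)) ^ (a - 1) * (b / (a + b)) ^ (b - 1) ≤
      ∫ x in (0 : ℝ)..1, x ^ (a - 1) * (1 - x) ^ (b - 1) := by
  set s := a + b with hs_def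
  set p := a / s with hp_def
  have hs : 0 < s := by positivity
  have hp : 0 < p := by positivity
  have hwindow : p + 1 / s ≤ 1 := by
    rw [← add_div, div_le_one hs]; linarith
  -- On the window `[p, p + 1/s]` just right of the mean `p`, the integrand stays within a factor
  -- `e` of `p ^ (a - 1) * (1 - p) ^ (b - 1)`, since `(1 - 1/b) ^ (b - 1) ≥ e⁻¹`.
  have hfloor : ∀ x ∈ Set.Icc p (p + 1 / s),
      p ^ (a - 1) * ((b - 1) / s) ^ (b - 1) ≤ x ^ (a - 1) * (1 - x) ^ (b - 1) := by
    rintro x ⟨hpx, hxs⟩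
    have h1x : (b - 1) / s ≤ 1 - x := by
      have : (b - 1) / s = 1 - (p + 1 / s) := by rw [hp_def, hs_def]; field_simp; ring
      linarith
    have hb0 : 0 ≤ (b - 1) / s := div_nonneg (by linarith) hs.le
    exact mul_le_mul (rpow_le_rpow hp.le hpx (by linarith)) (rpow_le_rpow hb0 h1x (by linarith))
      (rpow_nonneg hb0 _) (rpow_nonneg (hp.le.trans hpx) _)
  have hcont := continuous_rpow_mul_one_sub_rpow ha hb.le
  have hwin : (1 / s) * (p ^ (a - 1) * ((b - 1) / s) ^ (b - 1)) ≤
      ∫ x in p..(p + 1 / s), x ^ (a - 1) * (1 - x) ^ (b - 1) := by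
    have := integral_mono_on (by linarith [one_div_pos.2 hs]) intervalIntegrable_const
      (hcont.intervalIntegrable (μ := volume) _ _) hfloor
    rwa [intervalIntegral.integral_const, smul_eq_mul, add_sub_cancel_left] at this
  have hsub : ∫ x in p..(p + 1 / s), x ^ (a - 1) * (1 - x) ^ (b - 1) ≤
      ∫ x in (0 : ℝ)..1, x ^ (a - 1) * (1 - x) ^ (b - 1) := by
    refine integral_mono_interval hp.le (by linarith [one_div_pos.2 hs]) hwindow ?_
      (hcont.intervalIntegrable _ _)
    refine (ae_restrict_iff' measurableSet_Ioc).2 (Filter.Eventually.of_forall ?_)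
    rintro x ⟨hx0, hx1⟩
    exact mul_nonneg (rpow_nonneg hx0.le _) (rpow_nonneg (by linarith) _)
  have hsplit : ((b - 1) / s) ^ (b - 1) = (b / s) ^ (b - 1) * (1 - b⁻¹) ^ (b - 1) := by
    rw [← mul_rpow (by positivity) (sub_pos.2 (inv_lt_one_of_one_lt₀ hb)).le]
    congr 1
    field_simp
  refine le_trans ?_ (hwin.trans hsub)
  rw [hsplit]
  have := exp_neg_one_le_one_sub_inv_rpow hb
  calc exp (-1) / s * p ^ (a - 1) * (b / s) ^ (b - 1)
      = 1 / s * (p ^ (a - 1) * ((b / s) ^ (b - 1) * exp (-1))) := by ring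
    _ ≤ 1 / s * (p ^ (a - 1) * ((b / s) ^ (b - 1) * (1 - b⁻¹) ^ (b - 1))) := by gcongr

lemma Real.Gamma_add_div_Gamma_mul_Gamma_le {a b : ℝ} (ha : 1 ≤ a) (hb : 1 < b) :
    Gamma (a + b) / (Gamma a * Gamma b) ≤
      exp 1 * (a + b) / ((a / (a + b)) ^ (a - 1) * (b / (a + b)) ^ (b - 1)) := by
  have ha0 : 0 < a := by linarith
  have hb0 : 0 < b := by linarith
  have hlow := le_integral_rpow_mul_one_sub_rpow ha hb
  have hlow_pos : 0 < exp (-1) / (a + b) * (a / (a + b)) ^ (a - 1) * (b / (a + b)) ^ (b - 1) := by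
    positivity
  rw [Gamma_mul_Gamma_eq_Gamma_add_mul_integral ha0 hb0,
    div_mul_cancel_left₀ (Gamma_pos_of_pos (by positivity)).ne', ← one_div]
  calc 1 / ∫ x in (0 : ℝ)..1, x ^ (a - 1) * (1 - x) ^ (b - 1)
      ≤ 1 / (exp (-1) / (a + b) * (a / (a + b)) ^ (a - 1) * (b / (a + b)) ^ (b - 1)) :=
        one_div_le_one_div_of_le hlow_pos hlow
    _ = _ := by
        rw [exp_neg]
        field_simp

lemma betaDens_le_exp_one_mul_rpow {α ε x : ℝ} (hε0 : 0 < ε) (hε1 : ε < 1) (hα : 1 ≤ α)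
    (hx0 : 0 < x) (hx1 : x < 1) :
    betaDens α ε x ≤
      exp 1 * α / (x * (1 - x)) * ((x / ε) ^ (α / (1 - ε)) * ((1 - x) / (1 - ε)) ^ (α / ε)) := by
  have h1ε : 0 < 1 - ε := by linarith
  have h1x : 0 < 1 - x := by linarith
  set a := α / (1 - ε) with ha_def
  set b := α / ε with hb_def
  have hab : α / (ε * (1 - ε)) = a + b := by rw [ha_def, hb_def]; field_simp; ring
  have hpa : a / (a + b) = ε := by rw [← hab, ha_def]; field_simp
  have hpb : b / (a + b) = 1 - ε := by rw [← hab, hb_def]; field_simp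
  have ha : 1 ≤ a := by rw [ha_def, le_div_iff₀ h1ε]; nlinarith
  have hb : 1 < b := by rw [hb_def, lt_div_iff₀ hε0]; nlinarith
  have hratio := Gamma_add_div_Gamma_mul_Gamma_le ha hb
  rw [hpa, hpb, ← hab] at hratio
  unfold betaDens
  calc x ^ (a - 1) * (1 - x) ^ (b - 1) * (Gamma (α / (ε * (1 - ε))) / (Gamma a * Gamma b))
      ≤ x ^ (a - 1) * (1 - x) ^ (b - 1) *
          (exp 1 * (α / (ε * (1 - ε))) / (ε ^ (a - 1) * (1 - ε) ^ (b - 1))) := by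
        gcongr
    _ = _ := by
        rw [rpow_sub hx0, rpow_sub h1x, rpow_sub hε0, rpow_sub h1ε, div_rpow hx0.le hε0.le,
          div_rpow h1x.le h1ε.le]
        simp only [rpow_one]
        field_simp

lemma three_halves_le_log_nine_halves : (3 : ℝ) / 2 ≤ log (9 / 2) := by
  rw [le_log_iff_exp_le (by norm_num)]
  have he3 : exp 1 ^ 3 < 81 / 4 :=
    (pow_lt_pow_left₀ exp_one_lt_d9 (exp_pos 1).le three_ne_zero).trans (by norm_num)
  have hsq : exp (3 / 2) ^ 2 = exp 1 ^ 3 := by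
    rw [← exp_nat_mul, ← exp_nat_mul]; norm_num
  nlinarith [exp_pos (3 / 2)]

lemma log_add_one_sub_le {r : ℝ} (hr0 : 0 < r) (hr : r ≤ 1 / 3) :
    log r + (1 - r) ≤ -1 / 12 + log (2 * r / (1 + r)) / 2 := by
  have h3r : log (3 * r) ≤ 3 * r - 1 := log_le_sub_one_of_pos (by positivity)
  have hmono : log (3 * r / 2) ≤ log (2 * r / (1 + r)) :=
    log_le_log (by positivity) (by rw [div_le_div_iff₀ two_pos (by positivity)]; nlinarith)
  have h9 := three_halves_le_log_nine_halves
  rw [log_div (by positivity) two_ne_zero] at hmono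
  rw [log_div (by norm_num) two_ne_zero, show (9 : ℝ) = 3 * 3 by norm_num,
    log_mul three_ne_zero three_ne_zero] at h9
  rw [log_mul three_ne_zero hr0.ne'] at h3r hmono
  linarith

lemma rpow_mul_rpow_le_exp_mul_rpow {α ε x : ℝ} (hε0 : 0 < ε) (hε1 : ε < 1) (hα : 0 ≤ α)
    (hx0 : 0 < x) (hx : x ≤ ε / 3) :
    (x / ε) ^ (α / (1 - ε)) * ((1 - x) / (1 - ε)) ^ (α / ε) ≤
      exp (-(α / 12)) * (2 * x / (x + ε)) ^ (α / (2 * (1 - ε))) := by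
  have h1ε : 0 < 1 - ε := by linarith
  have h1x : 0 < 1 - x := by linarith
  set a := α / (1 - ε) with ha_def
  set r := x / ε with hr_def
  have hr0 : 0 < r := by positivity
  have hr : r ≤ 1 / 3 := by rw [hr_def, div_le_iff₀ hε0]; linarith
  have hαa : α ≤ a := by rw [ha_def, le_div_iff₀ h1ε]; nlinarith
  have hlog : log ((1 - x) / (1 - ε)) * (α / ε) ≤ a * (1 - r) := by
    have := log_le_sub_one_of_pos (show 0 < (1 - x) / (1 - ε) by positivity)
    calc log ((1 - x) / (1 - ε)) * (α / ε) ≤ ((1 - x) / (1 - ε) - 1) * (α / ε) := by gcongr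
      _ = a * (1 - r) := by rw [ha_def, hr_def]; field_simp; ring
  have hq : α / (2 * (1 - ε)) = a / 2 := by rw [ha_def]; field_simp
  have hxr : 2 * x / (x + ε) = 2 * r / (1 + r) := by rw [hr_def]; field_simp; ring
  rw [rpow_def_of_pos hr0, rpow_def_of_pos (by positivity), rpow_def_of_pos (by positivity),
    ← exp_add, ← exp_add, exp_le_exp, hq, hxr]
  have := mul_le_mul_of_nonneg_left (log_add_one_sub_le hr0 hr) (by positivity : 0 ≤ a)
  nlinarith

lemma exp_one_mul_mul_exp_neg_le {α : ℝ} (hα : 0 ≤ α) :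
    exp 1 * α * exp (-(α / 12)) ≤ 6 * √α := by
  have hsqrt : √α ≤ 2 * exp (α / 12) := by
    have h1 : √α ≤ 2 + α / 6 := by
      nlinarith [sq_sqrt hα, sqrt_nonneg α, sq_nonneg (√α - 3)]
    linarith [add_one_le_exp (α / 12)]
  have hsqrt' : √α * exp (-(α / 12)) ≤ 2 := by
    rw [exp_neg, ← div_eq_mul_inv, div_le_iff₀ (exp_pos _)]; exact hsqrt
  have he : exp 1 < 3 := exp_one_lt_three
  calc exp 1 * α * exp (-(α / 12)) = exp 1 * √α * (√α * exp (-(α / 12))) := by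
        linear_combination (-(exp 1 * exp (-(α / 12)))) * mul_self_sqrt hα
    _ ≤ 3 * √α * 2 := by gcongr
    _ = 6 * √α := by ring

lemma betaDens_le_sqrt_mul_rpow {α ε x : ℝ} (hε0 : 0 < ε) (hε1 : ε < 1) (hα : 1 ≤ α)
    (hx0 : 0 < x) (hx : x ≤ ε / 3) :
    betaDens α ε x ≤ 6 * √α / (x * (1 - x)) * (2 * x / (x + ε)) ^ (α / (2 * (1 - ε))) := by
  have hx1 : 0 < 1 - x := by linarith
  calc betaDens α ε x
      ≤ exp 1 * α / (x * (1 - x)) * ((x / ε) ^ (α / (1 - ε)) * ((1 - x) / (1 - ε)) ^ (α / ε)) :=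
        betaDens_le_exp_one_mul_rpow hε0 hε1 hα hx0 (by linarith)
    _ ≤ exp 1 * α / (x * (1 - x)) *
          (exp (-(α / 12)) * (2 * x / (x + ε)) ^ (α / (2 * (1 - ε)))) := by
        gcongr ?_ * ?_
        exact rpow_mul_rpow_le_exp_mul_rpow hε0 hε1 (by linarith) hx0 hx
    _ = exp 1 * α * exp (-(α / 12)) / (x * (1 - x)) *
          (2 * x / (x + ε)) ^ (α / (2 * (1 - ε))) := by ring
    _ ≤ 6 * √α / (x * (1 - x)) * (2 * x / (x + ε)) ^ (α / (2 * (1 - ε))) := by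
        gcongr ?_ / _ * _
        exact exp_one_mul_mul_exp_neg_le (by linarith)

lemma betaDens_le_sqrt_mul_rpow_sub_one {α ε x : ℝ} (hε0 : 0 < ε) (hε1 : ε < 1) (hα : 1 ≤ α)
    (hx0 : 0 < x) (hx : x ≤ ε / 3) :
    betaDens α ε x ≤ 9 * √α * (2 / ε) ^ (α / (2 * (1 - ε))) * x ^ (α / (2 * (1 - ε)) - 1) := by
  set q := α / (2 * (1 - ε))
  have hx1 : 2 / 3 ≤ 1 - x := by linarith
  calc betaDens α ε x ≤ 6 * √α / (x * (1 - x)) * (2 * x / (x + ε)) ^ q :=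
        betaDens_le_sqrt_mul_rpow hε0 hε1 hα hx0 hx
    _ ≤ 6 * √α / (x * (2 / 3)) * (2 / ε * x) ^ q := by
        gcongr
        rw [div_mul_eq_mul_div, mul_comm 2 x]
        gcongr
        linarith
    _ = 9 * √α * (2 / ε) ^ q * x ^ (q - 1) := by
        rw [mul_rpow (by positivity) hx0.le, rpow_sub_one hx0.ne']
        field_simp
        ring

lemma integral_betaDens_le {α ε : ℝ} (hε0 : 0 < ε) (hε1 : ε < 1) (hα : 1 ≤ α) :
    ∫ x in (0 : ℝ)..(ε / 3), betaDens α ε x ≤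
      18 * α ^ (-(1 : ℝ) / 2) * (1 - ε) * ((3 : ℝ) / 2) ^ (-(α / (2 * (1 - ε)))) := by
  have h1ε : 0 < 1 - ε := by linarith
  set q := α / (2 * (1 - ε)) with hq_def
  have hq : 0 < q := by positivity
  have hcont : Continuous (betaDens α ε) :=
    (continuous_rpow_mul_one_sub_rpow (by rw [le_div_iff₀ h1ε]; nlinarith)
      (by rw [le_div_iff₀ hε0]; nlinarith)).mul continuous_const
  have hmono := integral_mono_on_of_le_Ioo (by positivity) (hcont.intervalIntegrable _ _)
    ((intervalIntegrable_rpow' (by linarith : -1 < q - 1)).const_mul (9 * √α * (2 / ε) ^ q))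
    fun x hx => betaDens_le_sqrt_mul_rpow_sub_one hε0 hε1 hα hx.1 hx.2.le
  refine hmono.trans_eq ?_
  rw [intervalIntegral.integral_const_mul, integral_rpow (Or.inl (by linarith)), sub_add_cancel,
    zero_rpow hq.ne', sub_zero, rpow_neg (by norm_num), ← inv_rpow (by norm_num),
    show (-(1 : ℝ) / 2) = -(1 / 2) by norm_num, rpow_neg (by linarith), ← sqrt_eq_rpow,
    mul_assoc, ← mul_div_assoc, ← mul_rpow (by positivity) (by positivity),
    show 2 / ε * (ε / 3) = (3 / 2 : ℝ)⁻¹ by field_simp, hq_def]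
  have hsqrt : √α ^ 2 = α := sq_sqrt (by linarith)
  field_simp
  rw [hsqrt]
  ring

theorem betaDens_left_tail_bound :
    ∃ C > 0, ∀ ε ∈ Set.Ioo (0 : ℝ) 1, ∃ α₀ : ℝ, ∀ α ≥ α₀,
      (∀ x : ℝ, 0 < x → x < ε / 3 →
        betaDens α ε x ≤
          C * Real.sqrt α / (x * (1 - x)) * (2 * x / (x + ε)) ^ (α / (2 * (1 - ε)))) ∧
      (∫ x in (0 : ℝ)..(ε / 3), betaDens α ε x) ≤
        C * α ^ (-(1 : ℝ) / 2) * (1 - ε) * ((3 : ℝ) / 2) ^ (-(α / (2 * (1 - ε)))) := by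
  refine ⟨18, by norm_num, fun ε ⟨hε0, hε1⟩ => ⟨1, fun α hα => ⟨fun x hx0 hx => ?_,
    integral_betaDens_le hε0 hε1 hα⟩⟩⟩
  refine (betaDens_le_sqrt_mul_rpow hε0 hε1 hα hx0 hx.le).trans ?_
  have hx1 : 0 < 1 - x := by linarith
  gcongr
  norm_num
end
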